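/- In the RNN setup, for every feasible point z ∈ F₀^{RNN}, the tangent cone has the closed form T_{F₀^{RNN}}(z) = {d : d_{v_t} = D_V s_t + V d_{s_t} + d_c, d_{r_t} = σ′(v_t; d_{v_t}), d_{w_t} = D_W s_{t-1} + W d_{s_{t-1}} + D_A x_t + d_b, d_{s_t} = σ′(w_t; d_{w_t}) for t = 1,2,3}, with d_{s_0} := 0, and the radial cone has the closed form P_{F₀^{RNN}}(z) = {d ∈ T_{F₀^{RNN}}(z) : D_V d_{s_t} = 0 and D_W d_{s_{t-1}} = 0 for t = 1,2,3}. Here D_A, D_V, D_W denote the matrix blocks of the direction d corresponding to A, V, W, and σ′(v;h) denotes the componentwise directional derivative of σ. -/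

import Mathlib

open Filter Topology

noncomputable section

section General

variable {E F : Type*} [NormedAddCommGroup E] [NormedSpace ℝ E]
  [NormedAddCommGroup F] [NormedSpace ℝ F]

/-- `f` has directional derivative `y` at `x` along direction `d`. -/
def HasDirDeriv (f : E → F) (x d : E) (y : F) : Prop :=
  Tendsto (fun τ : ℝ => τ⁻¹ • (f (x + τ • d) - f x)) (𝓝[>] 0) (𝓝 y)

/-- `f` has first- and second-order directional derivatives `y₁`, `y₂` at `x` along `d`. -/
def HasDirDeriv2 (f : E → F) (x d : E) (y₁ y₂ : F) : Prop :=
  HasDirDeriv f x d y₁ ∧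
    Tendsto (fun τ : ℝ => (τ ^ 2 / 2)⁻¹ • (f (x + τ • d) - f x - τ • y₁)) (𝓝[>] 0) (𝓝 y₂)

open Classical in
def dirD (f : E → F) (x d : E) : F :=
  if h : ∃ y, HasDirDeriv f x d y then h.choose else 0

open Classical in
def dirD2 (f : E → F) (x d : E) : F :=
  if h : ∃ y, Tendsto
      (fun τ : ℝ => (τ ^ 2 / 2)⁻¹ • (f (x + τ • d) - f x - τ • dirD f x d)) (𝓝[>] 0) (𝓝 y)
  then h.choose else 0

/-- The (Bouligand) tangent cone of `s` at `x`. -/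
def tangentCone (s : Set E) (x : E) : Set E :=
  {d | ∃ (z : ℕ → E) (τ : ℕ → ℝ), (∀ k, z k ∈ s) ∧ Tendsto z atTop (𝓝 x) ∧
    (∀ k, 0 < τ k) ∧ Tendsto τ atTop (𝓝 0) ∧
    Tendsto (fun k => (τ k)⁻¹ • (z k - x)) atTop (𝓝 d)}

/-- The radial cone of `s` at `x`. -/
def radialCone (s : Set E) (x : E) : Set E :=
  {d | ∃ τ : ℕ → ℝ, (∀ k, 0 < τ k) ∧ Tendsto τ atTop (𝓝 0) ∧ ∀ k, x + τ k • d ∈ s}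

/-- `f` is twice semidifferentiable (in the sense of Rockafellar-Wets / Cui-Pang). -/
def TwiceSemidiff (f : E → ℝ) : Prop :=
  ∀ x d : E, ∃ y₁ y₂ : ℝ,
    Tendsto (fun p : ℝ × E => (f (x + p.1 • p.2) - f x) / p.1)
      ((𝓝[>] 0) ×ˢ 𝓝 d) (𝓝 y₁) ∧
    Tendsto (fun p : ℝ × E => (f (x + p.1 • p.2) - f x - p.1 * dirD f x p.2) / (p.1 ^ 2 / 2))
      ((𝓝[>] 0) ×ˢ 𝓝 d) (𝓝 y₂)

end General
section RNN

/-- `ℝ^m` with the Euclidean norm. -/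
abbrev Vec (m : ℕ) : Type := EuclideanSpace ℝ (Fin m)

/-- The variable space of the RNN training problem: the network parameters
`(A, V, W, b, c)` together with the auxiliary variables `(w, s, v, r)` over `t = 1, 2, 3`. -/
abbrev RZ (N0 N1 N2 : ℕ) : Type :=
  ((Fin N1 → Fin N0 → ℝ) × (Fin N2 → Fin N1 → ℝ) × (Fin N1 → Fin N1 → ℝ) × Vec N1 × Vec N2) ×
    ((Fin 3 → Vec N1) × (Fin 3 → Vec N1) × (Fin 3 → Vec N2) × (Fin 3 → Vec N2))

variable {N0 N1 N2 : ℕ}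

def zA (z : RZ N0 N1 N2) : Fin N1 → Fin N0 → ℝ := z.1.1
def zV (z : RZ N0 N1 N2) : Fin N2 → Fin N1 → ℝ := z.1.2.1
def zW (z : RZ N0 N1 N2) : Fin N1 → Fin N1 → ℝ := z.1.2.2.1
def zb (z : RZ N0 N1 N2) : Vec N1 := z.1.2.2.2.1
def zc (z : RZ N0 N1 N2) : Vec N2 := z.1.2.2.2.2
def zw (z : RZ N0 N1 N2) : Fin 3 → Vec N1 := z.2.1
def zs (z : RZ N0 N1 N2) : Fin 3 → Vec N1 := z.2.2.1
def zv (z : RZ N0 N1 N2) : Fin 3 → Vec N2 := z.2.2.2.1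
def zr (z : RZ N0 N1 N2) : Fin 3 → Vec N2 := z.2.2.2.2

/-- `s_{t-1}`, with the convention `s₀ = 0`. -/
def sPrev {m : ℕ} (s : Fin 3 → Vec m) (t : Fin 3) : Vec m :=
  if (t : ℕ) = 0 then 0 else s ⟨(t : ℕ) - 1, lt_of_le_of_lt (Nat.sub_le _ _) t.isLt⟩

/-- The (leaky) ReLU activation `σ(u) = max{u, αu}`. -/
def lrelu (α u : ℝ) : ℝ := max u (α * u)

/-- The directional derivative `σ′(v; h)` of the (leaky) ReLU (componentwise scalar form). -/
def lreluD (α v h : ℝ) : ℝ :=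
  if 0 < v then h else if v < 0 then α * h else max h (α * h)

/-- The feasible set `F₀^{RNN}` of the constrained RNN training problem (P0-RNN). -/
def RFeas (α : ℝ) (x : Fin 3 → Vec N0) : Set (RZ N0 N1 N2) :=
  {z | ∀ t : Fin 3,
    (∀ i, zw z t i = (∑ j, zW z i j * sPrev (zs z) t j) + (∑ j, zA z i j * x t j) + zb z i) ∧
    (∀ i, zs z t i = lrelu α (zw z t i)) ∧
    (∀ i, zv z t i = (∑ j, zV z i j * zs z t j) + zc z i) ∧
    (∀ i, zr z t i = lrelu α (zv z t i))}

/-- The objective `F(z) = ‖r − y‖²/6 + λ(‖A‖_F² + ‖V‖_F² + ‖W‖_F² + ‖b‖² + ‖c‖²)`. -/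
def RF (lam : ℝ) (y : Fin 3 → Vec N2) (z : RZ N0 N1 N2) : ℝ :=
  (∑ t, ∑ i, (zr z t i - y t i) ^ 2) / 6 +
    lam * ((∑ i, ∑ j, zA z i j ^ 2) + (∑ i, ∑ j, zV z i j ^ 2) + (∑ i, ∑ j, zW z i j ^ 2) +
      (∑ i, zb z i ^ 2) + (∑ i, zc z i ^ 2))

/-- The `ℓ₁`-penalty objective `Θ` of the penalized RNN training problem (P1-RNN). -/
def RTh (α lam β₁ β₂ : ℝ) (x : Fin 3 → Vec N0) (y : Fin 3 → Vec N2) (z : RZ N0 N1 N2) : ℝ :=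
  RF lam y z +
    β₁ * ∑ t, ((∑ i, |zw z t i -
        ((∑ j, zW z i j * sPrev (zs z) t j) + (∑ j, zA z i j * x t j) + zb z i)|) +
      ∑ i, |zs z t i - lrelu α (zw z t i)|) +
    β₂ * ∑ t, ((∑ i, |zv z t i - ((∑ j, zV z i j * zs z t j) + zc z i)|) +
      ∑ i, |zr z t i - lrelu α (zv z t i)|)

/-- The claimed closed form of the tangent cone of `F₀^{RNN}` at a feasible point `z`. -/
def RTan (α : ℝ) (x : Fin 3 → Vec N0) (z : RZ N0 N1 N2) : Set (RZ N0 N1 N2) :=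
  {d | ∀ t : Fin 3,
    (∀ i, zv d t i = (∑ j, zV d i j * zs z t j) + (∑ j, zV z i j * zs d t j) + zc d i) ∧
    (∀ i, zr d t i = lreluD α (zv z t i) (zv d t i)) ∧
    (∀ i, zw d t i = (∑ j, zW d i j * sPrev (zs z) t j) + (∑ j, zW z i j * sPrev (zs d) t j) +
      (∑ j, zA d i j * x t j) + zb d i) ∧
    (∀ i, zs d t i = lreluD α (zw z t i) (zw d t i))}

end RNN

section Aux

open Filter Topology

variable {N0 N1 N2 : ℕ}

/-! ### Componentwise limits in `Vec` and `RZ` -/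

theorem vec_tendsto_of {m : ℕ} {β : Type*} {l : Filter β} {f : β → Vec m} {L : Vec m}
    (h : ∀ i, Tendsto (fun b => f b i) l (𝓝 (L i))) : Tendsto f l (𝓝 L) := by
  have h2 : Tendsto (fun b => (WithLp.equiv 2 (Fin m → ℝ)) (f b)) l
      (𝓝 ((WithLp.equiv 2 (Fin m → ℝ)) L)) := tendsto_pi_nhds.2 fun i => h i
  exact ((PiLp.continuous_toLp 2 (fun _ : Fin m => ℝ)).tendsto _).comp h2

theorem vec_tendsto_to {m : ℕ} {β : Type*} {l : Filter β} {f : β → Vec m} {L : Vec m} (i : Fin m)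
    (h : Tendsto f l (𝓝 L)) : Tendsto (fun b => f b i) l (𝓝 (L i)) :=
  ((EuclideanSpace.proj i).continuous.tendsto _).comp h

theorem rz_tendsto_of {β : Type*} {l : Filter β} {f : β → RZ N0 N1 N2} {L : RZ N0 N1 N2}
    (hA : ∀ i j, Tendsto (fun b => zA (f b) i j) l (𝓝 (zA L i j)))
    (hV : ∀ i j, Tendsto (fun b => zV (f b) i j) l (𝓝 (zV L i j)))
    (hW : ∀ i j, Tendsto (fun b => zW (f b) i j) l (𝓝 (zW L i j)))
    (hb : ∀ i, Tendsto (fun b => zb (f b) i) l (𝓝 (zb L i)))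
    (hc : ∀ i, Tendsto (fun b => zc (f b) i) l (𝓝 (zc L i)))
    (hw : ∀ t i, Tendsto (fun b => zw (f b) t i) l (𝓝 (zw L t i)))
    (hs : ∀ t i, Tendsto (fun b => zs (f b) t i) l (𝓝 (zs L t i)))
    (hv : ∀ t i, Tendsto (fun b => zv (f b) t i) l (𝓝 (zv L t i)))
    (hr : ∀ t i, Tendsto (fun b => zr (f b) t i) l (𝓝 (zr L t i))) :
    Tendsto f l (𝓝 L) := by
  have h1 : Tendsto (fun b => (f b).1) l (𝓝 L.1) := by
    refine Tendsto.prodMk_nhds (tendsto_pi_nhds.2 fun i => tendsto_pi_nhds.2 fun j => hA i j) ?_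
    refine Tendsto.prodMk_nhds (tendsto_pi_nhds.2 fun i => tendsto_pi_nhds.2 fun j => hV i j) ?_
    refine Tendsto.prodMk_nhds (tendsto_pi_nhds.2 fun i => tendsto_pi_nhds.2 fun j => hW i j) ?_
    exact Tendsto.prodMk_nhds (vec_tendsto_of hb) (vec_tendsto_of hc)
  have h2 : Tendsto (fun b => (f b).2) l (𝓝 L.2) := by
    refine Tendsto.prodMk_nhds (tendsto_pi_nhds.2 fun t => vec_tendsto_of (hw t)) ?_
    refine Tendsto.prodMk_nhds (tendsto_pi_nhds.2 fun t => vec_tendsto_of (hs t)) ?_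
    exact Tendsto.prodMk_nhds (tendsto_pi_nhds.2 fun t => vec_tendsto_of (hv t))
      (tendsto_pi_nhds.2 fun t => vec_tendsto_of (hr t))
  exact h1.prodMk_nhds h2

theorem rz_tendsto_zA {β : Type*} {l : Filter β} {f : β → RZ N0 N1 N2} {L : RZ N0 N1 N2}
    (h : Tendsto f l (𝓝 L)) (i : Fin N1) (j : Fin N0) :
    Tendsto (fun b => zA (f b) i j) l (𝓝 (zA L i j)) :=
  tendsto_pi_nhds.1 (tendsto_pi_nhds.1 ((continuous_fst.fst.tendsto _).comp h) i) j

theorem rz_tendsto_zV {β : Type*} {l : Filter β} {f : β → RZ N0 N1 N2} {L : RZ N0 N1 N2}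
    (h : Tendsto f l (𝓝 L)) (i : Fin N2) (j : Fin N1) :
    Tendsto (fun b => zV (f b) i j) l (𝓝 (zV L i j)) :=
  tendsto_pi_nhds.1 (tendsto_pi_nhds.1 ((continuous_fst.snd.fst.tendsto _).comp h) i) j

theorem rz_tendsto_zW {β : Type*} {l : Filter β} {f : β → RZ N0 N1 N2} {L : RZ N0 N1 N2}
    (h : Tendsto f l (𝓝 L)) (i : Fin N1) (j : Fin N1) :
    Tendsto (fun b => zW (f b) i j) l (𝓝 (zW L i j)) :=
  tendsto_pi_nhds.1 (tendsto_pi_nhds.1 ((continuous_fst.snd.snd.fst.tendsto _).comp h) i) j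

theorem rz_tendsto_zb {β : Type*} {l : Filter β} {f : β → RZ N0 N1 N2} {L : RZ N0 N1 N2}
    (h : Tendsto f l (𝓝 L)) (i : Fin N1) :
    Tendsto (fun b => zb (f b) i) l (𝓝 (zb L i)) :=
  vec_tendsto_to i ((continuous_fst.snd.snd.snd.fst.tendsto _).comp h)

theorem rz_tendsto_zc {β : Type*} {l : Filter β} {f : β → RZ N0 N1 N2} {L : RZ N0 N1 N2}
    (h : Tendsto f l (𝓝 L)) (i : Fin N2) :
    Tendsto (fun b => zc (f b) i) l (𝓝 (zc L i)) :=
  vec_tendsto_to i ((continuous_fst.snd.snd.snd.snd.tendsto _).comp h)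

theorem rz_tendsto_zw {β : Type*} {l : Filter β} {f : β → RZ N0 N1 N2} {L : RZ N0 N1 N2}
    (h : Tendsto f l (𝓝 L)) (t : Fin 3) (i : Fin N1) :
    Tendsto (fun b => zw (f b) t i) l (𝓝 (zw L t i)) :=
  vec_tendsto_to i (tendsto_pi_nhds.1 ((continuous_snd.fst.tendsto _).comp h) t)

theorem rz_tendsto_zs {β : Type*} {l : Filter β} {f : β → RZ N0 N1 N2} {L : RZ N0 N1 N2}
    (h : Tendsto f l (𝓝 L)) (t : Fin 3) (i : Fin N1) :
    Tendsto (fun b => zs (f b) t i) l (𝓝 (zs L t i)) :=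
  vec_tendsto_to i (tendsto_pi_nhds.1 ((continuous_snd.snd.fst.tendsto _).comp h) t)

theorem rz_tendsto_zv {β : Type*} {l : Filter β} {f : β → RZ N0 N1 N2} {L : RZ N0 N1 N2}
    (h : Tendsto f l (𝓝 L)) (t : Fin 3) (i : Fin N2) :
    Tendsto (fun b => zv (f b) t i) l (𝓝 (zv L t i)) :=
  vec_tendsto_to i (tendsto_pi_nhds.1 ((continuous_snd.snd.snd.fst.tendsto _).comp h) t)

theorem rz_tendsto_zr {β : Type*} {l : Filter β} {f : β → RZ N0 N1 N2} {L : RZ N0 N1 N2}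
    (h : Tendsto f l (𝓝 L)) (t : Fin 3) (i : Fin N2) :
    Tendsto (fun b => zr (f b) t i) l (𝓝 (zr L t i)) :=
  vec_tendsto_to i (tendsto_pi_nhds.1 ((continuous_snd.snd.snd.snd.tendsto _).comp h) t)

/-! ### Component arithmetic (all `rfl`) -/

example (c : ℝ) (p q : RZ N0 N1 N2) (i : Fin N1) (j : Fin N0) :
    zA (c • (p - q)) i j = c * (zA p i j - zA q i j) := rfl
example (c : ℝ) (p q : RZ N0 N1 N2) (i : Fin N1) :
    zb (c • (p - q)) i = c * (zb p i - zb q i) := rfl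
example (c : ℝ) (p q : RZ N0 N1 N2) (t : Fin 3) (i : Fin N1) :
    zw (c • (p - q)) t i = c * (zw p t i - zw q t i) := rfl
example (c : ℝ) (p q : RZ N0 N1 N2) (t : Fin 3) (i : Fin N2) :
    zr (p + c • q) t i = zr p t i + c * zr q t i := rfl



/-! ### Scalar lemmas about the leaky ReLU -/

theorem lrelu_tendsto {α : ℝ} (hα1 : α ≤ 1) {β : Type*} {l : Filter β} {T u : β → ℝ} {u₀ h : ℝ}
    (hT0 : ∀ᶠ b in l, 0 < T b) (hu : Tendsto u l (𝓝 u₀))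
    (hq : Tendsto (fun b => (T b)⁻¹ * (u b - u₀)) l (𝓝 h)) :
    Tendsto (fun b => (T b)⁻¹ * (lrelu α (u b) - lrelu α u₀)) l (𝓝 (lreluD α u₀ h)) := by
  rcases lt_trichotomy u₀ 0 with h0 | h0 | h0
  · have hev : ∀ᶠ b in l, u b < 0 := hu.eventually_lt_const h0
    have hlim : Tendsto (fun b => α * ((T b)⁻¹ * (u b - u₀))) l (𝓝 (α * h)) :=
      tendsto_const_nhds.mul hq
    rw [show lreluD α u₀ h = α * h by simp [lreluD, h0, not_lt.2 h0.le]]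
    refine hlim.congr' (hev.mono fun b hb => ?_)
    have e1 : lrelu α (u b) = α * u b := max_eq_right (by nlinarith)
    have e2 : lrelu α u₀ = α * u₀ := max_eq_right (by nlinarith)
    dsimp only; rw [e1, e2]; ring
  · subst h0
    rw [show lreluD α 0 h = max h (α * h) by simp [lreluD]]
    have hlim : Tendsto (fun b => max ((T b)⁻¹ * (u b - 0)) (α * ((T b)⁻¹ * (u b - 0)))) l
        (𝓝 (max h (α * h))) := hq.max (tendsto_const_nhds.mul hq)
    refine hlim.congr' (hT0.mono fun b hb => ?_)
    dsimp only
    have e2 : lrelu α 0 = 0 := by simp [lrelu]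
    rw [e2, sub_zero, sub_zero]
    show max ((T b)⁻¹ * u b) (α * ((T b)⁻¹ * u b)) = (T b)⁻¹ * max (u b) (α * u b)
    rw [mul_max_of_nonneg _ _ (le_of_lt (inv_pos.2 hb))]
    ring_nf
  · have hev : ∀ᶠ b in l, 0 < u b := hu.eventually_const_lt h0
    rw [show lreluD α u₀ h = h by simp [lreluD, h0]]
    refine hq.congr' (hev.mono fun b hb => ?_)
    have e1 : lrelu α (u b) = u b := max_eq_left (by nlinarith)
    have e2 : lrelu α u₀ = u₀ := max_eq_left (by nlinarith)
    dsimp only; rw [e1, e2]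

theorem lrelu_exact {α : ℝ} (hα1 : α ≤ 1) (u h : ℝ) :
    ∀ᶠ τ in 𝓝[>] (0:ℝ), lrelu α (u + τ * h) = lrelu α u + τ * lreluD α u h := by
  have hc : Tendsto (fun τ : ℝ => u + τ * h) (𝓝[>] 0) (𝓝 u) := by
    have h2 : Tendsto (fun τ : ℝ => u + τ * h) (𝓝 0) (𝓝 (u + 0 * h)) :=
      (continuous_const.add (continuous_id.mul continuous_const)).tendsto 0
    simpa using h2.mono_left nhdsWithin_le_nhds
  rcases lt_trichotomy u 0 with h0 | h0 | h0
  · filter_upwards [hc.eventually_lt_const h0] with τ hτ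
    have e1 : lrelu α (u + τ * h) = α * (u + τ * h) := max_eq_right (by nlinarith)
    have e2 : lrelu α u = α * u := max_eq_right (by nlinarith)
    rw [e1, e2, show lreluD α u h = α * h by simp [lreluD, h0, not_lt.2 h0.le]]; ring
  · subst h0
    filter_upwards [self_mem_nhdsWithin] with τ (hτ : 0 < τ)
    have e2 : lrelu α 0 = 0 := by simp [lrelu]
    rw [e2, show lreluD α 0 h = max h (α * h) by simp [lreluD]]
    show max (0 + τ * h) (α * (0 + τ * h)) = 0 + τ * max h (α * h)
    rw [mul_max_of_nonneg _ _ hτ.le]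
    ring_nf
  · filter_upwards [hc.eventually_const_lt h0] with τ hτ
    have e1 : lrelu α (u + τ * h) = u + τ * h := max_eq_left (by nlinarith)
    have e2 : lrelu α u = u := max_eq_left (by nlinarith)
    rw [e1, e2, show lreluD α u h = h by simp [lreluD, h0]]

theorem lrelu_cont {α : ℝ} {β : Type*} {l : Filter β} {u : β → ℝ} {u₀ : ℝ}
    (hu : Tendsto u l (𝓝 u₀)) : Tendsto (fun b => lrelu α (u b)) l (𝓝 (lrelu α u₀)) :=
  ((continuous_id.max (continuous_const.mul continuous_id)).tendsto u₀).comp hu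

/-! ### Quotient calculus -/

section Quot
variable {β : Type*} {l : Filter β} {T : β → ℝ}

theorem quot_mul {f g : β → ℝ} {f0 df g0 dg : ℝ}
    (hdf : Tendsto (fun b => (T b)⁻¹ * (f b - f0)) l (𝓝 df))
    (hg : Tendsto g l (𝓝 g0))
    (hdg : Tendsto (fun b => (T b)⁻¹ * (g b - g0)) l (𝓝 dg)) :
    Tendsto (fun b => (T b)⁻¹ * (f b * g b - f0 * g0)) l (𝓝 (df * g0 + f0 * dg)) :=
  ((hdf.mul hg).add (tendsto_const_nhds.mul hdg)).congr fun b => by ring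

theorem quot_add {f g : β → ℝ} {f0 df g0 dg : ℝ}
    (hdf : Tendsto (fun b => (T b)⁻¹ * (f b - f0)) l (𝓝 df))
    (hdg : Tendsto (fun b => (T b)⁻¹ * (g b - g0)) l (𝓝 dg)) :
    Tendsto (fun b => (T b)⁻¹ * ((f b + g b) - (f0 + g0))) l (𝓝 (df + dg)) :=
  (hdf.add hdg).congr fun b => by ring

theorem quot_sum {ι : Type*} [Fintype ι] {f : ι → β → ℝ} {f0 df : ι → ℝ}
    (hdf : ∀ i, Tendsto (fun b => (T b)⁻¹ * (f i b - f0 i)) l (𝓝 (df i))) :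
    Tendsto (fun b => (T b)⁻¹ * ((∑ i, f i b) - ∑ i, f0 i)) l (𝓝 (∑ i, df i)) := by
  have := tendsto_finset_sum Finset.univ (fun i _ => hdf i)
  refine this.congr fun b => ?_
  rw [← Finset.sum_sub_distrib, Finset.mul_sum]

theorem quot_const (c : ℝ) :
    Tendsto (fun b => (T b)⁻¹ * (c - c)) l (𝓝 0) := by
  simp only [sub_self, mul_zero]
  exact tendsto_const_nhds

theorem quot_affine (a b : ℝ) :
    Tendsto (fun τ : ℝ => τ⁻¹ * ((a + τ * b) - a)) (𝓝[>] (0:ℝ)) (𝓝 b) := by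
  refine tendsto_const_nhds.congr' ?_
  filter_upwards [self_mem_nhdsWithin] with τ (hτ : 0 < τ)
  field_simp
  ring

theorem val_affine (a b : ℝ) :
    Tendsto (fun τ : ℝ => a + τ * b) (𝓝[>] (0:ℝ)) (𝓝 a) := by
  have h2 : Tendsto (fun τ : ℝ => a + τ * b) (𝓝 0) (𝓝 (a + 0 * b)) :=
    (continuous_const.add (continuous_id.mul continuous_const)).tendsto 0
  simpa using h2.mono_left nhdsWithin_le_nhds

end Quot

/-! ### Sum expansion helpers -/

theorem sum_affine {ι : Type*} [Fintype ι] (a b c e : ι → ℝ) (τ : ℝ) :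
    ∑ j, (a j + τ * b j) * (c j + τ * e j) =
      (∑ j, a j * c j) + τ * ((∑ j, b j * c j) + (∑ j, a j * e j)) + τ^2 * (∑ j, b j * e j) := by
  simp only [Finset.mul_sum, ← Finset.sum_add_distrib]
  exact Finset.sum_congr rfl fun j _ => by ring

theorem sum_affine' {ι : Type*} [Fintype ι] (a b c : ι → ℝ) (τ : ℝ) :
    ∑ j, (a j + τ * b j) * c j = (∑ j, a j * c j) + τ * (∑ j, b j * c j) := by
  simp only [Finset.mul_sum, ← Finset.sum_add_distrib]
  exact Finset.sum_congr rfl fun j _ => by ring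

/-! ### `sPrev` helpers -/

theorem sPrev_add_smul (p q : RZ N0 N1 N2) (τ : ℝ) (t : Fin 3) (j : Fin N1) :
    sPrev (zs (p + τ • q)) t j = sPrev (zs p) t j + τ * sPrev (zs q) t j := by
  unfold sPrev
  split
  · show (0:ℝ) = 0 + τ * 0; ring
  · rfl

def sPrevNat {m : ℕ} (s : Fin 3 → Vec m) : ℕ → Vec m
  | 0 => 0
  | n+1 => s ⟨n % 3, Nat.mod_lt _ (by norm_num)⟩

theorem fin_mk_mod (t : Fin 3) : (⟨(t : ℕ) % 3, Nat.mod_lt _ (by norm_num)⟩ : Fin 3) = t :=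
  Fin.ext (Nat.mod_eq_of_lt t.isLt)

theorem sPrevNat_coe {m : ℕ} (s : Fin 3 → Vec m) (t : Fin 3) :
    sPrevNat s (t : ℕ) = sPrev s t := by
  rcases t with ⟨tv, ht⟩
  cases tv with
  | zero =>
    show sPrevNat s 0 = sPrev s ⟨0, ht⟩
    unfold sPrev
    rw [if_pos rfl]
    rfl
  | succ n =>
    show sPrevNat s (n + 1) = sPrev s ⟨n + 1, ht⟩
    unfold sPrev sPrevNat
    rw [if_neg (Nat.succ_ne_zero n)]
    exact congrArg s (Fin.ext (by simpa using Nat.mod_eq_of_lt (by omega : n < 3)))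

theorem sPrevNat_succ {m : ℕ} (s : Fin 3 → Vec m) (t : Fin 3) :
    sPrevNat s ((t : ℕ) + 1) = s t := by
  show s _ = s t
  exact congrArg s (fin_mk_mod t)

/-! ### The feasible curve used for the tangent cone inclusion -/

def Scur (α : ℝ) (x : Fin 3 → Vec N0) (W' : Fin N1 → Fin N1 → ℝ) (A' : Fin N1 → Fin N0 → ℝ)
    (b' : Vec N1) : ℕ → Vec N1
  | 0 => 0
  | n+1 => WithLp.toLp 2 fun i => lrelu α ((∑ j, W' i j * Scur α x W' A' b' n j) +
      (∑ j, A' i j * x ⟨n % 3, Nat.mod_lt _ (by norm_num)⟩ j) + b' i)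

def Acur (z d : RZ N0 N1 N2) (τ : ℝ) : Fin N1 → Fin N0 → ℝ := fun i j => zA z i j + τ * zA d i j
def Vcur (z d : RZ N0 N1 N2) (τ : ℝ) : Fin N2 → Fin N1 → ℝ := fun i j => zV z i j + τ * zV d i j
def Wcur (z d : RZ N0 N1 N2) (τ : ℝ) : Fin N1 → Fin N1 → ℝ := fun i j => zW z i j + τ * zW d i j
def bcur (z d : RZ N0 N1 N2) (τ : ℝ) : Vec N1 := WithLp.toLp 2 fun i => zb z i + τ * zb d i
def ccur (z d : RZ N0 N1 N2) (τ : ℝ) : Vec N2 := WithLp.toLp 2 fun i => zc z i + τ * zc d i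

def SC (α : ℝ) (x : Fin 3 → Vec N0) (z d : RZ N0 N1 N2) (τ : ℝ) : ℕ → Vec N1 :=
  Scur α x (Wcur z d τ) (Acur z d τ) (bcur z d τ)

def zcur (α : ℝ) (x : Fin 3 → Vec N0) (z d : RZ N0 N1 N2) (τ : ℝ) : RZ N0 N1 N2 :=
  ⟨⟨Acur z d τ, Vcur z d τ, Wcur z d τ, bcur z d τ, ccur z d τ⟩,
   ⟨fun t => WithLp.toLp 2 fun i => (∑ j, Wcur z d τ i j * SC α x z d τ (t : ℕ) j) +
      (∑ j, Acur z d τ i j * x t j) + bcur z d τ i,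
    fun t => SC α x z d τ ((t : ℕ) + 1),
    fun t => WithLp.toLp 2 fun i => (∑ j, Vcur z d τ i j * SC α x z d τ ((t : ℕ) + 1) j) + ccur z d τ i,
    fun t => WithLp.toLp 2 fun i => lrelu α
      ((∑ j, Vcur z d τ i j * SC α x z d τ ((t : ℕ) + 1) j) + ccur z d τ i)⟩⟩

theorem sPrev_zcur (α : ℝ) (x : Fin 3 → Vec N0) (z d : RZ N0 N1 N2) (τ : ℝ) (t : Fin 3) :
    sPrev (zs (zcur α x z d τ)) t = SC α x z d τ (t : ℕ) := by
  rcases t with ⟨tv, ht⟩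
  cases tv with
  | zero =>
    show sPrev (zs (zcur α x z d τ)) ⟨0, ht⟩ = _
    unfold sPrev
    rw [if_pos rfl]
    rfl
  | succ n =>
    show sPrev (zs (zcur α x z d τ)) ⟨n + 1, ht⟩ = SC α x z d τ (n + 1)
    unfold sPrev
    rw [if_neg (Nat.succ_ne_zero n)]
    show SC α x z d τ (((n + 1 : ℕ) - 1) + 1) = SC α x z d τ (n + 1)
    norm_num

theorem zcur_feas (α : ℝ) (x : Fin 3 → Vec N0) (z d : RZ N0 N1 N2) (τ : ℝ) :
    zcur α x z d τ ∈ RFeas α x := by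
  intro t
  refine ⟨fun i => ?_, fun i => ?_, fun i => rfl, fun i => rfl⟩
  · show _ = (∑ j, Wcur z d τ i j * sPrev (zs (zcur α x z d τ)) t j) + _ + _
    rw [sPrev_zcur]; rfl
  · show SC α x z d τ ((t:ℕ) + 1) i = _
    show lrelu α ((∑ j, Wcur z d τ i j * SC α x z d τ (t:ℕ) j) +
      (∑ j, Acur z d τ i j * x ⟨(t:ℕ) % 3, Nat.mod_lt _ (by norm_num)⟩ j) + bcur z d τ i) = _
    rw [fin_mk_mod]
    rfl

theorem zA_as (p q : RZ N0 N1 N2) (c : ℝ) (i : Fin N1) (j : Fin N0) :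
    zA (p + c • q) i j = zA p i j + c * zA q i j := rfl
theorem zV_as (p q : RZ N0 N1 N2) (c : ℝ) (i : Fin N2) (j : Fin N1) :
    zV (p + c • q) i j = zV p i j + c * zV q i j := rfl
theorem zW_as (p q : RZ N0 N1 N2) (c : ℝ) (i j : Fin N1) :
    zW (p + c • q) i j = zW p i j + c * zW q i j := rfl
theorem zb_as (p q : RZ N0 N1 N2) (c : ℝ) (i : Fin N1) :
    zb (p + c • q) i = zb p i + c * zb q i := rfl
theorem zc_as (p q : RZ N0 N1 N2) (c : ℝ) (i : Fin N2) :
    zc (p + c • q) i = zc p i + c * zc q i := rfl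
theorem zw_as (p q : RZ N0 N1 N2) (c : ℝ) (t : Fin 3) (i : Fin N1) :
    zw (p + c • q) t i = zw p t i + c * zw q t i := rfl
theorem zs_as (p q : RZ N0 N1 N2) (c : ℝ) (t : Fin 3) (i : Fin N1) :
    zs (p + c • q) t i = zs p t i + c * zs q t i := rfl
theorem zv_as (p q : RZ N0 N1 N2) (c : ℝ) (t : Fin 3) (i : Fin N2) :
    zv (p + c • q) t i = zv p t i + c * zv q t i := rfl
theorem zr_as (p q : RZ N0 N1 N2) (c : ℝ) (t : Fin 3) (i : Fin N2) :
    zr (p + c • q) t i = zr p t i + c * zr q t i := rfl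

theorem radial_lin {τ : ℕ → ℝ} (hτpos : ∀ k, 0 < τ k)
    (hτ0 : Filter.Tendsto τ Filter.atTop (𝓝 0)) {P L Q : ℝ}
    (h : ∀ k, P = L + τ k * Q) : P = L ∧ Q = 0 := by
  have h1 : Filter.Tendsto (fun k => L + τ k * Q) Filter.atTop (𝓝 L) := by
    have h2 := Filter.Tendsto.add
      (tendsto_const_nhds : Filter.Tendsto (fun _ : ℕ => L) Filter.atTop (𝓝 L))
      (hτ0.mul_const Q)
    simpa using h2
  have hP : P = L := tendsto_nhds_unique (tendsto_const_nhds.congr fun k => h k) h1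
  refine ⟨hP, ?_⟩
  have h2 := h 0
  rw [hP] at h2
  have h3 : τ 0 * Q = 0 := by linarith
  rcases mul_eq_zero.1 h3 with h4 | h4
  · exact absurd h4 (hτpos 0).ne'
  · exact h4

end Aux

/-- Corollary 4.1 (cones): closed forms of the tangent cone and the radial cone of
`F₀^{RNN}` at any feasible point. -/
theorem stmt17
    {N0 N1 N2 : ℕ} (hN0 : 0 < N0) (hN1 : 0 < N1) (hN2 : 0 < N2)
    (α : ℝ) (hα0 : 0 ≤ α) (hα1 : α < 1)
    (x : Fin 3 → Vec N0) :
    ∀ z ∈ RFeas (N0 := N0) (N1 := N1) (N2 := N2) α x,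
      tangentCone (RFeas α x) z = RTan α x z ∧
      radialCone (RFeas α x) z =
        {d ∈ RTan α x z | ∀ t : Fin 3,
          (∀ i, (∑ j, zV d i j * zs d t j) = 0) ∧
          (∀ i, (∑ j, zW d i j * sPrev (zs d) t j) = 0)} := by
  intro z hz
  have hα1' : α ≤ 1 := hα1.le
  constructor
  · apply Set.Subset.antisymm
    · -- tangentCone ⊆ RTan
      rintro d ⟨zk, τ, hmem, hlim, hτpos, hτ0, hd⟩
      have hτpos' : ∀ᶠ k in Filter.atTop, 0 < τ k := Filter.Eventually.of_forall hτpos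
      -- quotient limits of all components
      have qA : ∀ i j, Filter.Tendsto (fun k => (τ k)⁻¹ * (zA (zk k) i j - zA z i j))
          Filter.atTop (𝓝 (zA d i j)) := fun i j => rz_tendsto_zA hd i j
      have qV : ∀ i j, Filter.Tendsto (fun k => (τ k)⁻¹ * (zV (zk k) i j - zV z i j))
          Filter.atTop (𝓝 (zV d i j)) := fun i j => rz_tendsto_zV hd i j
      have qW : ∀ i j, Filter.Tendsto (fun k => (τ k)⁻¹ * (zW (zk k) i j - zW z i j))
          Filter.atTop (𝓝 (zW d i j)) := fun i j => rz_tendsto_zW hd i j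
      have qb : ∀ i, Filter.Tendsto (fun k => (τ k)⁻¹ * (zb (zk k) i - zb z i))
          Filter.atTop (𝓝 (zb d i)) := fun i => rz_tendsto_zb hd i
      have qc : ∀ i, Filter.Tendsto (fun k => (τ k)⁻¹ * (zc (zk k) i - zc z i))
          Filter.atTop (𝓝 (zc d i)) := fun i => rz_tendsto_zc hd i
      have qw : ∀ t i, Filter.Tendsto (fun k => (τ k)⁻¹ * (zw (zk k) t i - zw z t i))
          Filter.atTop (𝓝 (zw d t i)) := fun t i => rz_tendsto_zw hd t i
      have qs : ∀ t i, Filter.Tendsto (fun k => (τ k)⁻¹ * (zs (zk k) t i - zs z t i))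
          Filter.atTop (𝓝 (zs d t i)) := fun t i => rz_tendsto_zs hd t i
      have qv : ∀ t i, Filter.Tendsto (fun k => (τ k)⁻¹ * (zv (zk k) t i - zv z t i))
          Filter.atTop (𝓝 (zv d t i)) := fun t i => rz_tendsto_zv hd t i
      have qr : ∀ t i, Filter.Tendsto (fun k => (τ k)⁻¹ * (zr (zk k) t i - zr z t i))
          Filter.atTop (𝓝 (zr d t i)) := fun t i => rz_tendsto_zr hd t i
      -- value limits
      have vs : ∀ t i, Filter.Tendsto (fun k => zs (zk k) t i) Filter.atTop (𝓝 (zs z t i)) :=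
        fun t i => rz_tendsto_zs hlim t i
      have vw : ∀ t i, Filter.Tendsto (fun k => zw (zk k) t i) Filter.atTop (𝓝 (zw z t i)) :=
        fun t i => rz_tendsto_zw hlim t i
      have vv : ∀ t i, Filter.Tendsto (fun k => zv (zk k) t i) Filter.atTop (𝓝 (zv z t i)) :=
        fun t i => rz_tendsto_zv hlim t i
      have vsp : ∀ t j, Filter.Tendsto (fun k => sPrev (zs (zk k)) t j)
          Filter.atTop (𝓝 (sPrev (zs z) t j)) := by
        intro t j
        unfold sPrev
        split
        · exact tendsto_const_nhds
        · exact vs _ j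
      have qsp : ∀ t j, Filter.Tendsto (fun k => (τ k)⁻¹ * (sPrev (zs (zk k)) t j -
          sPrev (zs z) t j)) Filter.atTop (𝓝 (sPrev (zs d) t j)) := by
        intro t j
        unfold sPrev
        split
        · exact quot_const 0
        · exact qs _ j
      intro t
      refine ⟨fun i => ?_, fun i => ?_, fun i => ?_, fun i => ?_⟩
      · -- v equation
        have h2 : Filter.Tendsto (fun k => (τ k)⁻¹ * (zv (zk k) t i - zv z t i)) Filter.atTop
            (𝓝 ((∑ j, (zV d i j * zs z t j + zV z i j * zs d t j)) + zc d i)) := by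
          have h3 := quot_add (quot_sum (fun j => quot_mul (qV i j) (vs t j) (qs t j))) (qc i)
          refine h3.congr fun k => ?_
          rw [((hmem k) t).2.2.1 i, (hz t).2.2.1 i]
        have h4 := tendsto_nhds_unique (qv t i) h2
        rw [h4, Finset.sum_add_distrib]
      · -- r equation
        have h2 := lrelu_tendsto hα1' hτpos' (vv t i) (qv t i)
        have h2' := h2.congr fun k => by rw [← ((hmem k) t).2.2.2 i, ← (hz t).2.2.2 i]
        exact tendsto_nhds_unique (qr t i) h2'
      · -- w equation
        have h2 : Filter.Tendsto (fun k => (τ k)⁻¹ * (zw (zk k) t i - zw z t i)) Filter.atTop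
            (𝓝 ((∑ j, (zW d i j * sPrev (zs z) t j + zW z i j * sPrev (zs d) t j)) +
              (∑ j, (zA d i j * x t j + zA z i j * 0)) + zb d i)) := by
          have h3 := quot_add (quot_add
            (quot_sum (fun j => quot_mul (qW i j) (vsp t j) (qsp t j)))
            (quot_sum (fun j => quot_mul (qA i j) tendsto_const_nhds (quot_const (x t j)))))
            (qb i)
          refine h3.congr fun k => ?_
          rw [((hmem k) t).1 i, (hz t).1 i]
        have h4 := tendsto_nhds_unique (qw t i) h2
        rw [h4, Finset.sum_add_distrib, Finset.sum_add_distrib]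
        simp only [mul_zero, Finset.sum_const_zero, add_zero]
      · -- s equation
        have h2 := lrelu_tendsto hα1' hτpos' (vw t i) (qw t i)
        have h2' := h2.congr fun k => by rw [← ((hmem k) t).2.1 i, ← (hz t).2.1 i]
        exact tendsto_nhds_unique (qs t i) h2'
    · -- RTan ⊆ tangentCone
      rintro d hd
      -- limits of the recursively defined state sequence
      have hS : ∀ n : ℕ, n ≤ 3 → ∀ j,
          Filter.Tendsto (fun τ => SC α x z d τ n j) (𝓝[>] (0:ℝ))
            (𝓝 (sPrevNat (zs z) n j)) ∧
          Filter.Tendsto (fun τ => τ⁻¹ * (SC α x z d τ n j - sPrevNat (zs z) n j)) (𝓝[>] (0:ℝ))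
            (𝓝 (sPrevNat (zs d) n j)) := by
        intro n
        induction n with
        | zero =>
          intro _ j
          exact ⟨tendsto_const_nhds, quot_const 0⟩
        | succ n IH =>
          intro hn3 j
          have hnlt : n < 3 := by omega
          have IH' := IH (by omega)
          have hxx : (⟨n % 3, Nat.mod_lt _ (by norm_num)⟩ : Fin 3) = ⟨n, hnlt⟩ :=
            Fin.ext (Nat.mod_eq_of_lt hnlt)
          have hgv : Filter.Tendsto (fun τ => (∑ j', Wcur z d τ j j' * SC α x z d τ n j') +
              (∑ j', Acur z d τ j j' * x ⟨n % 3, Nat.mod_lt _ (by norm_num)⟩ j') + bcur z d τ j)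
              (𝓝[>] (0:ℝ)) (𝓝 (zw z ⟨n, hnlt⟩ j)) := by
            have h3 : Filter.Tendsto (fun τ => (∑ j', Wcur z d τ j j' * SC α x z d τ n j') +
                (∑ j', Acur z d τ j j' * x ⟨n % 3, Nat.mod_lt _ (by norm_num)⟩ j') + bcur z d τ j)
                (𝓝[>] (0:ℝ)) (𝓝 ((∑ j', zW z j j' * sPrevNat (zs z) n j') +
                  (∑ j', zA z j j' * x ⟨n % 3, Nat.mod_lt _ (by norm_num)⟩ j') + zb z j)) :=
              ((tendsto_finset_sum _ fun j' _ => (val_affine _ _).mul (IH' j').1).add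
                (tendsto_finset_sum _ fun j' _ =>
                  (val_affine _ _).mul tendsto_const_nhds)).add (val_affine _ _)
            have e : zw z ⟨n, hnlt⟩ j = (∑ j', zW z j j' * sPrevNat (zs z) n j') +
                (∑ j', zA z j j' * x ⟨n % 3, Nat.mod_lt _ (by norm_num)⟩ j') + zb z j := by
              rw [(hz ⟨n, hnlt⟩).1 j, ← sPrevNat_coe (zs z) ⟨n, hnlt⟩, hxx]
            rw [e]; exact h3
          have hgq : Filter.Tendsto (fun τ => τ⁻¹ *
              ((∑ j', Wcur z d τ j j' * SC α x z d τ n j') +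
              (∑ j', Acur z d τ j j' * x ⟨n % 3, Nat.mod_lt _ (by norm_num)⟩ j') + bcur z d τ j -
              zw z ⟨n, hnlt⟩ j)) (𝓝[>] (0:ℝ)) (𝓝 (zw d ⟨n, hnlt⟩ j)) := by
            have h3 := quot_add (quot_add
              (quot_sum (fun j' => quot_mul (quot_affine (zW z j j') (zW d j j'))
                (IH' j').1 (IH' j').2))
              (quot_sum (fun j' => quot_mul
                (quot_affine (zA z j j') (zA d j j'))
                tendsto_const_nhds
                (quot_const (x ⟨n % 3, Nat.mod_lt _ (by norm_num)⟩ j')))))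
              (quot_affine (zb z j) (zb d j))
            have e0 : zw z ⟨n, hnlt⟩ j = (∑ j', zW z j j' * sPrevNat (zs z) n j') +
                (∑ j', zA z j j' * x ⟨n % 3, Nat.mod_lt _ (by norm_num)⟩ j') + zb z j := by
              rw [(hz ⟨n, hnlt⟩).1 j, ← sPrevNat_coe (zs z) ⟨n, hnlt⟩, hxx]
            have e2 : zw d ⟨n, hnlt⟩ j =
                (∑ j', (zW d j j' * sPrevNat (zs z) n j' + zW z j j' * sPrevNat (zs d) n j')) +
                (∑ j', (zA d j j' * x ⟨n % 3, Nat.mod_lt _ (by norm_num)⟩ j' + zA z j j' * 0)) +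
                zb d j := by
              rw [(hd ⟨n, hnlt⟩).2.2.1 j, ← sPrevNat_coe (zs z) ⟨n, hnlt⟩,
                ← sPrevNat_coe (zs d) ⟨n, hnlt⟩, hxx, Finset.sum_add_distrib,
                Finset.sum_add_distrib]
              simp only [mul_zero, Finset.sum_const_zero, add_zero]
            rw [e2, e0]
            exact h3
          have ev : sPrevNat (zs z) (n+1) j = lrelu α (zw z ⟨n, hnlt⟩ j) := by
            show zs z ⟨n % 3, Nat.mod_lt _ (by norm_num)⟩ j = _
            rw [hxx]; exact (hz _).2.1 j
          have ev2 : sPrevNat (zs d) (n+1) j =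
              lreluD α (zw z ⟨n, hnlt⟩ j) (zw d ⟨n, hnlt⟩ j) := by
            show zs d ⟨n % 3, Nat.mod_lt _ (by norm_num)⟩ j = _
            rw [hxx]; exact (hd _).2.2.2 j
          constructor
          · rw [ev]
            exact lrelu_cont hgv
          · rw [ev, ev2]
            exact lrelu_tendsto hα1' self_mem_nhdsWithin hgv hgq
      -- limits of the `w` component of the curve
      have hGw : ∀ (t : Fin 3) (i : Fin N1),
          Filter.Tendsto (fun τ => zw (zcur α x z d τ) t i) (𝓝[>] (0:ℝ)) (𝓝 (zw z t i)) ∧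
          Filter.Tendsto (fun τ => τ⁻¹ * (zw (zcur α x z d τ) t i - zw z t i)) (𝓝[>] (0:ℝ))
            (𝓝 (zw d t i)) := by
        intro t i
        have IS := hS (t : ℕ) (le_of_lt t.isLt)
        constructor
        · have h3 : Filter.Tendsto (fun τ => (∑ j', Wcur z d τ i j' * SC α x z d τ (t:ℕ) j') +
              (∑ j', Acur z d τ i j' * x t j') + bcur z d τ i)
              (𝓝[>] (0:ℝ)) (𝓝 ((∑ j', zW z i j' * sPrevNat (zs z) (t:ℕ) j') +
                (∑ j', zA z i j' * x t j') + zb z i)) :=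
            ((tendsto_finset_sum _ fun j' _ => (val_affine _ _).mul (IS j').1).add
              (tendsto_finset_sum _ fun j' _ =>
                (val_affine _ _).mul tendsto_const_nhds)).add (val_affine _ _)
          have e : zw z t i = (∑ j', zW z i j' * sPrevNat (zs z) (t:ℕ) j') +
              (∑ j', zA z i j' * x t j') + zb z i := by
            rw [(hz t).1 i, ← sPrevNat_coe (zs z) t]
          rw [e]; exact h3
        · have h3 := quot_add (quot_add
            (quot_sum (fun j' => quot_mul (quot_affine (zW z i j') (zW d i j'))
              (IS j').1 (IS j').2))
            (quot_sum (fun j' => quot_mul (quot_affine (zA z i j') (zA d i j'))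
              tendsto_const_nhds (quot_const (x t j')))))
            (quot_affine (zb z i) (zb d i))
          have e0 : zw z t i = (∑ j', zW z i j' * sPrevNat (zs z) (t:ℕ) j') +
              (∑ j', zA z i j' * x t j') + zb z i := by
            rw [(hz t).1 i, ← sPrevNat_coe (zs z) t]
          have e2 : zw d t i =
              (∑ j', (zW d i j' * sPrevNat (zs z) (t:ℕ) j' +
                zW z i j' * sPrevNat (zs d) (t:ℕ) j')) +
              (∑ j', (zA d i j' * x t j' + zA z i j' * 0)) + zb d i := by
            rw [(hd t).2.2.1 i, ← sPrevNat_coe (zs z) t, ← sPrevNat_coe (zs d) t,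
              Finset.sum_add_distrib, Finset.sum_add_distrib]
            simp only [mul_zero, Finset.sum_const_zero, add_zero]
          rw [e2, e0]
          exact h3
      -- limits of the `s` component of the curve
      have hSs : ∀ (t : Fin 3) (i : Fin N1),
          Filter.Tendsto (fun τ => zs (zcur α x z d τ) t i) (𝓝[>] (0:ℝ)) (𝓝 (zs z t i)) ∧
          Filter.Tendsto (fun τ => τ⁻¹ * (zs (zcur α x z d τ) t i - zs z t i)) (𝓝[>] (0:ℝ))
            (𝓝 (zs d t i)) := by
        intro t i
        have IS := hS ((t : ℕ) + 1) (by omega) i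
        have ez : zs z t i = sPrevNat (zs z) ((t:ℕ)+1) i := by rw [sPrevNat_succ]
        have ed : zs d t i = sPrevNat (zs d) ((t:ℕ)+1) i := by rw [sPrevNat_succ]
        rw [ez, ed]
        exact IS
      -- limits of the `v` component of the curve
      have hVv : ∀ (t : Fin 3) (i : Fin N2),
          Filter.Tendsto (fun τ => zv (zcur α x z d τ) t i) (𝓝[>] (0:ℝ)) (𝓝 (zv z t i)) ∧
          Filter.Tendsto (fun τ => τ⁻¹ * (zv (zcur α x z d τ) t i - zv z t i)) (𝓝[>] (0:ℝ))
            (𝓝 (zv d t i)) := by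
        intro t i
        have IS := hS ((t : ℕ) + 1) (by omega)
        constructor
        · have h3 : Filter.Tendsto (fun τ => (∑ j', Vcur z d τ i j' *
              SC α x z d τ ((t:ℕ)+1) j') + ccur z d τ i)
              (𝓝[>] (0:ℝ)) (𝓝 ((∑ j', zV z i j' * sPrevNat (zs z) ((t:ℕ)+1) j') + zc z i)) :=
            (tendsto_finset_sum _ fun j' _ => (val_affine _ _).mul (IS j').1).add
              (val_affine _ _)
          have e : zv z t i = (∑ j', zV z i j' * sPrevNat (zs z) ((t:ℕ)+1) j') + zc z i := by
            rw [(hz t).2.2.1 i, ← sPrevNat_succ (zs z) t]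
          rw [e]; exact h3
        · have h3 := quot_add (quot_sum (fun j' => quot_mul
            (quot_affine (zV z i j') (zV d i j')) (IS j').1 (IS j').2))
            (quot_affine (zc z i) (zc d i))
          have e0 : zv z t i = (∑ j', zV z i j' * sPrevNat (zs z) ((t:ℕ)+1) j') + zc z i := by
            rw [(hz t).2.2.1 i, ← sPrevNat_succ (zs z) t]
          have e2 : zv d t i = (∑ j', (zV d i j' * sPrevNat (zs z) ((t:ℕ)+1) j' +
              zV z i j' * sPrevNat (zs d) ((t:ℕ)+1) j')) + zc d i := by
            rw [(hd t).1 i, ← sPrevNat_succ (zs z) t, ← sPrevNat_succ (zs d) t,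
              Finset.sum_add_distrib]
          rw [e2, e0]
          exact h3
      -- limits of the `r` component of the curve
      have hRr : ∀ (t : Fin 3) (i : Fin N2),
          Filter.Tendsto (fun τ => zr (zcur α x z d τ) t i) (𝓝[>] (0:ℝ)) (𝓝 (zr z t i)) ∧
          Filter.Tendsto (fun τ => τ⁻¹ * (zr (zcur α x z d τ) t i - zr z t i)) (𝓝[>] (0:ℝ))
            (𝓝 (zr d t i)) := by
        intro t i
        have ez : zr z t i = lrelu α (zv z t i) := (hz t).2.2.2 i
        have ed : zr d t i = lreluD α (zv z t i) (zv d t i) := (hd t).2.1 i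
        rw [ez, ed]
        exact ⟨lrelu_cont (hVv t i).1,
          lrelu_tendsto hα1' self_mem_nhdsWithin (hVv t i).1 (hVv t i).2⟩
      -- assemble the sequence
      have hτpos : ∀ k : ℕ, 0 < (1:ℝ) / ((k:ℝ) + 1) := fun k => by positivity
      have hτ0 : Filter.Tendsto (fun k : ℕ => (1:ℝ) / ((k:ℝ) + 1)) Filter.atTop (𝓝 0) :=
        tendsto_one_div_add_atTop_nhds_zero_nat
      have hτF : Filter.Tendsto (fun k : ℕ => (1:ℝ) / ((k:ℝ) + 1)) Filter.atTop (𝓝[>] (0:ℝ)) :=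
        tendsto_nhdsWithin_of_tendsto_nhds_of_eventually_within _ hτ0
          (Filter.Eventually.of_forall fun k => hτpos k)
      refine ⟨fun k => zcur α x z d ((1:ℝ) / ((k:ℝ) + 1)), fun k => (1:ℝ) / ((k:ℝ) + 1),
        fun k => zcur_feas α x z d _, ?_, hτpos, hτ0, ?_⟩
      · exact rz_tendsto_of
          (fun i j => (val_affine (zA z i j) (zA d i j)).comp hτF)
          (fun i j => (val_affine (zV z i j) (zV d i j)).comp hτF)
          (fun i j => (val_affine (zW z i j) (zW d i j)).comp hτF)
          (fun i => (val_affine (zb z i) (zb d i)).comp hτF)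
          (fun i => (val_affine (zc z i) (zc d i)).comp hτF)
          (fun t i => ((hGw t i).1).comp hτF)
          (fun t i => ((hSs t i).1).comp hτF)
          (fun t i => ((hVv t i).1).comp hτF)
          (fun t i => ((hRr t i).1).comp hτF)
      · exact rz_tendsto_of
          (fun i j => (quot_affine (zA z i j) (zA d i j)).comp hτF)
          (fun i j => (quot_affine (zV z i j) (zV d i j)).comp hτF)
          (fun i j => (quot_affine (zW z i j) (zW d i j)).comp hτF)
          (fun i => (quot_affine (zb z i) (zb d i)).comp hτF)
          (fun i => (quot_affine (zc z i) (zc d i)).comp hτF)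
          (fun t i => ((hGw t i).2).comp hτF)
          (fun t i => ((hSs t i).2).comp hτF)
          (fun t i => ((hVv t i).2).comp hτF)
          (fun t i => ((hRr t i).2).comp hτF)

  · -- radial cone
    apply Set.Subset.antisymm
    · -- radialCone ⊆ {d ∈ RTan | ...}
      rintro d ⟨τ, hτpos, hτ0, hmem⟩
      have hτF : Filter.Tendsto τ Filter.atTop (𝓝[>] (0:ℝ)) :=
        tendsto_nhdsWithin_of_tendsto_nhds_of_eventually_within _ hτ0
          (Filter.Eventually.of_forall fun k => hτpos k)
      have hw' : ∀ k t i, zw z t i + τ k * zw d t i =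
          (∑ j, (zW z i j + τ k * zW d i j) * (sPrev (zs z) t j + τ k * sPrev (zs d) t j)) +
          (∑ j, (zA z i j + τ k * zA d i j) * x t j) + (zb z i + τ k * zb d i) := by
        intro k t i
        have h := ((hmem k) t).1 i
        simp only [zw_as, zW_as, zA_as, zb_as, sPrev_add_smul] at h
        exact h
      have hv' : ∀ k t i, zv z t i + τ k * zv d t i =
          (∑ j, (zV z i j + τ k * zV d i j) * (zs z t j + τ k * zs d t j)) +
          (zc z i + τ k * zc d i) := by
        intro k t i
        have h := ((hmem k) t).2.2.1 i
        simp only [zv_as, zV_as, zs_as, zc_as] at h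
        exact h
      have hs' : ∀ k t i, zs z t i + τ k * zs d t i =
          lrelu α (zw z t i + τ k * zw d t i) := by
        intro k t i
        have h := ((hmem k) t).2.1 i
        simp only [zs_as, zw_as] at h
        exact h
      have hr' : ∀ k t i, zr z t i + τ k * zr d t i =
          lrelu α (zv z t i + τ k * zv d t i) := by
        intro k t i
        have h := ((hmem k) t).2.2.2 i
        simp only [zr_as, zv_as] at h
        exact h
      have hWkey : ∀ t i, zw d t i = (∑ j, zW d i j * sPrev (zs z) t j) +
          (∑ j, zW z i j * sPrev (zs d) t j) + (∑ j, zA d i j * x t j) + zb d i ∧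
          (∑ j, zW d i j * sPrev (zs d) t j) = 0 := by
        intro t i
        refine radial_lin hτpos hτ0 fun k => ?_
        have h := hw' k t i
        rw [sum_affine, sum_affine'] at h
        have h0 := (hz t).1 i
        have hτ := (hτpos k).ne'
        apply mul_left_cancel₀ hτ
        linear_combination h - h0
      have hVkey : ∀ t i, zv d t i = (∑ j, zV d i j * zs z t j) +
          (∑ j, zV z i j * zs d t j) + zc d i ∧ (∑ j, zV d i j * zs d t j) = 0 := by
        intro t i
        refine radial_lin hτpos hτ0 fun k => ?_
        have h := hv' k t i
        rw [sum_affine] at h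
        have h0 := (hz t).2.2.1 i
        have hτ := (hτpos k).ne'
        apply mul_left_cancel₀ hτ
        linear_combination h - h0
      have hskey : ∀ t i, zs d t i = lreluD α (zw z t i) (zw d t i) := by
        intro t i
        obtain ⟨k, hk⟩ := (hτF.eventually (lrelu_exact hα1' (zw z t i) (zw d t i))).exists
        have h := hs' k t i
        rw [hk, ← (hz t).2.1 i] at h
        have hτ := (hτpos k).ne'
        apply mul_left_cancel₀ hτ
        linarith
      have hrkey : ∀ t i, zr d t i = lreluD α (zv z t i) (zv d t i) := by
        intro t i
        obtain ⟨k, hk⟩ := (hτF.eventually (lrelu_exact hα1' (zv z t i) (zv d t i))).exists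
        have h := hr' k t i
        rw [hk, ← (hz t).2.2.2 i] at h
        have hτ := (hτpos k).ne'
        apply mul_left_cancel₀ hτ
        linarith
      exact ⟨fun t => ⟨fun i => (hVkey t i).1, fun i => hrkey t i,
          fun i => (hWkey t i).1, fun i => hskey t i⟩,
        fun t => ⟨fun i => (hVkey t i).2, fun i => (hWkey t i).2⟩⟩
    · -- {d ∈ RTan | ...} ⊆ radialCone
      rintro d ⟨hdT, hdZ⟩
      have hex : ∀ᶠ τ in 𝓝[>] (0:ℝ), ∀ t : Fin 3,
          (∀ i : Fin N1, lrelu α (zw z t i + τ * zw d t i) =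
            lrelu α (zw z t i) + τ * lreluD α (zw z t i) (zw d t i)) ∧
          (∀ i : Fin N2, lrelu α (zv z t i + τ * zv d t i) =
            lrelu α (zv z t i) + τ * lreluD α (zv z t i) (zv d t i)) :=
        Filter.eventually_all.2 fun t => Filter.Eventually.and
          (Filter.eventually_all.2 fun i => lrelu_exact hα1' _ _)
          (Filter.eventually_all.2 fun i => lrelu_exact hα1' _ _)
      obtain ⟨u, hu0, hsub⟩ := mem_nhdsGT_iff_exists_Ioo_subset.1 hex
      have hu0' : (0:ℝ) < u := hu0
      have hτpos : ∀ k : ℕ, 0 < u / ((k:ℝ) + 2) := fun k => by positivity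
      have hτlt : ∀ k : ℕ, u / ((k:ℝ) + 2) < u := fun k =>
        div_lt_self hu0' (by have := Nat.cast_nonneg (α := ℝ) k; linarith)
      have hτ0 : Filter.Tendsto (fun k : ℕ => u / ((k:ℝ) + 2)) Filter.atTop (𝓝 0) := by
        apply Filter.Tendsto.div_atTop (tendsto_const_nhds)
        exact Filter.tendsto_atTop_add_const_right _ 2 tendsto_natCast_atTop_atTop
      refine ⟨fun k => u / ((k:ℝ) + 2), hτpos, hτ0, fun k => ?_⟩
      have hexk := hsub ⟨hτpos k, hτlt k⟩
      intro t
      refine ⟨fun i => ?_, fun i => ?_, fun i => ?_, fun i => ?_⟩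
      · simp only [zw_as, zW_as, zA_as, zb_as, sPrev_add_smul]
        rw [sum_affine, sum_affine']
        linear_combination (hz t).1 i + (u / ((k:ℝ) + 2)) * ((hdT t).2.2.1 i) -
          (u / ((k:ℝ) + 2))^2 * ((hdZ t).2 i)
      · simp only [zs_as, zw_as]
        rw [(hexk t).1 i, ← (hz t).2.1 i, ← (hdT t).2.2.2 i]
      · simp only [zv_as, zV_as, zs_as, zc_as]
        rw [sum_affine]
        linear_combination (hz t).2.2.1 i + (u / ((k:ℝ) + 2)) * ((hdT t).1 i) -
          (u / ((k:ℝ) + 2))^2 * ((hdZ t).1 i)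
      · simp only [zr_as, zv_as]
        rw [(hexk t).2 i, ← (hz t).2.2.2 i, ← (hdT t).2.1 i]
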